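/- Mean square displacement of the slicer map: for α ∈ (0,2), the MSD ⟨ΔX²_n⟩ = Σ_{j=−n}^{n} A_j j² satisfies ⟨ΔX²_n⟩ / n^{2−α} → 4/(2 − α) as n → ∞; in particular the transport exponent is 2 − α. -/

import Mathlib

open Filter Topology Finset

noncomputable def ell (α : ℝ) (j : ℕ) : ℝ := ((j : ℝ) + (2:ℝ) ^ (1/α)) ^ (-α)

noncomputable def slicerA (α : ℝ) (n : ℕ) (j : ℤ) : ℝ :=
  if j.natAbs = n then ell α (n - 1)
  else if j.natAbs < n ∧ j.natAbs % 2 = n % 2 then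
    (if j = 0 then 2 * (ell α 0 - ell α 1)
     else ell α (j.natAbs - 1) - ell α (j.natAbs + 1))
  else 0

noncomputable def msd (α : ℝ) (n : ℕ) : ℝ :=
  ∑ j ∈ Finset.Icc (-(n:ℤ)) (n:ℤ), slicerA α n j * (j:ℝ)^2

/-! Going from `n` to `n + 2` moves the weight `ℓ_{n+1}` from `±n` to `±(n + 2)`, so
`msd (n + 2) = msd n + 8 (n + 1) ℓ_{n+1}`. The increment is `~ 8 n^{1-α}` while
`(n + 2)^{2-α} - n^{2-α} ~ 2 (2 - α) n^{1-α}`, so the Stolz–Cesàro theorem, applied along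
even and along odd `n`, gives the limit `4 / (2 - α)`. -/

lemma slicerA_neg (α : ℝ) (n : ℕ) (j : ℤ) : slicerA α n (-j) = slicerA α n j := by
  simp [slicerA]

lemma msd_eq_two_mul_sum_range (α : ℝ) (n : ℕ) :
    msd α n = 2 * ∑ k ∈ range (n + 1), slicerA α n k * (k : ℝ) ^ 2 := by
  rw [msd, sum_Icc_of_even_eq_range (fun j => by simp [slicerA_neg]) n]
  simp

lemma slicerA_add_two_mul_sq (α : ℝ) {n k : ℕ} (hk : k ≤ n) :
    slicerA α (n + 2) k * (k : ℝ) ^ 2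
      = slicerA α n k * (k : ℝ) ^ 2 - if k = n then ell α (n + 1) * (n : ℝ) ^ 2 else 0 := by
  split_ifs with hkn
  · subst hkn
    rcases Nat.eq_zero_or_pos k with rfl | hk0
    · simp
    simp only [slicerA, Int.natAbs_natCast, Nat.cast_eq_zero, hk0.ne', if_true, if_false]
    rw [if_neg (by omega), if_pos (by omega)]
    ring
  · simp only [slicerA, Int.natAbs_natCast, Nat.add_mod_right, sub_zero]
    rw [if_neg (by omega), if_neg hkn]
    congr 2
    simp only [show k < n + 2 ↔ k < n by omega]

lemma msd_add_two (α : ℝ) (n : ℕ) :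
    msd α (n + 2) = msd α n + 8 * ((n : ℝ) + 1) * ell α (n + 1) := by
  have h_top : slicerA α (n + 2) (n + 2 : ℕ) = ell α (n + 1) := by
    simp only [slicerA, Int.natAbs_natCast]; simp
  have h_gap : slicerA α (n + 2) (n + 1 : ℕ) = 0 := by
    simp only [slicerA, Int.natAbs_natCast]; rw [if_neg (by omega), if_neg (by omega)]
  have h_bulk : ∑ k ∈ range (n + 1), slicerA α (n + 2) k * (k : ℝ) ^ 2
      = ∑ k ∈ range (n + 1), slicerA α n k * (k : ℝ) ^ 2
        - ell α (n + 1) * (n : ℝ) ^ 2 := by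
    rw [sum_congr rfl fun k hk => slicerA_add_two_mul_sq α (Nat.lt_succ_iff.1 (mem_range.1 hk)),
      sum_sub_distrib, sum_ite_eq' _ n, if_pos (self_mem_range_succ n)]
  rw [msd_eq_two_mul_sum_range, msd_eq_two_mul_sum_range, sum_range_succ, sum_range_succ, h_top,
    h_gap, h_bulk]
  push_cast
  ring

open Asymptotics

theorem tendsto_div_of_tendsto_sub_div_sub {a b : ℕ → ℝ} {L : ℝ} (hb : StrictMono b)
    (hb_top : Tendsto b atTop atTop)
    (h : Tendsto (fun n => (a (n + 1) - a n) / (b (n + 1) - b n)) atTop (𝓝 L)) :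
    Tendsto (fun n => a n / b n) atTop (𝓝 L) := by
  set g : ℕ → ℝ := fun n => b (n + 1) - b n
  have hg_pos (n : ℕ) : 0 < g n := sub_pos.2 (hb n.lt_succ_self)
  have h_step : (fun n => a (n + 1) - a n - L * g n) =o[atTop] g := by
    have h0 : Tendsto (fun n => (a (n + 1) - a n) / g n - L) atTop (𝓝 0) := by
      simpa using h.sub_const L
    refine (((isLittleO_one_iff ℝ).2 h0).mul_isBigO (isBigO_refl g atTop)).congr
      (fun n => ?_) (fun n => one_mul _)
    field_simp [(hg_pos n).ne']
  have h_sum : (fun n => a n - a 0 - L * (b n - b 0)) =o[atTop] fun n => b n - b 0 := by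
    have hg_sum (n : ℕ) : ∑ i ∈ range n, g i = b n - b 0 := sum_range_sub b n
    have hg_top : Tendsto (fun n => ∑ i ∈ range n, g i) atTop atTop := by
      simpa only [hg_sum, sub_eq_add_neg] using tendsto_atTop_add_const_right _ (-b 0) hb_top
    simpa only [sum_sub_distrib, ← mul_sum, hg_sum, sum_range_sub a] using
      h_step.sum_range (fun n => (hg_pos n).le) hg_top
  have h_const (c : ℝ) : (fun _ => c) =o[atTop] b :=
    isLittleO_const_left.2 (Or.inr (tendsto_norm_atTop_atTop.comp hb_top))
  have h_main : (fun n => a n - L * b n) =o[atTop] b := by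
    have := (h_sum.trans_isBigO ((isBigO_refl b atTop).sub (h_const _).isBigO)).add
      (h_const (a 0 - L * b 0))
    refine this.congr (fun n => by ring) fun _ => rfl
  rw [← zero_add L]
  refine (h_main.tendsto_div_nhds_zero.add_const L).congr' ?_
  filter_upwards [hb_top.eventually_gt_atTop 0] with n hn
  field_simp [hn.ne']
  ring

theorem tendsto_add_div_rpow_atTop (b γ : ℝ) :
    Tendsto (fun x : ℝ => ((x + b) / x) ^ γ) atTop (𝓝 1) := by
  have h : Tendsto (fun x : ℝ => 1 + b * x⁻¹) atTop (𝓝 1) := by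
    simpa using (tendsto_inv_atTop_zero.const_mul b).const_add 1
  have := (Real.continuousAt_rpow_const 1 γ (Or.inl one_ne_zero)).tendsto.comp h
  rw [Real.one_rpow] at this
  refine this.congr' ?_
  filter_upwards [eventually_gt_atTop 0] with x hx
  simp only [Function.comp_apply, div_eq_mul_inv, add_mul, mul_inv_cancel₀ hx.ne']

theorem tendsto_mul_one_add_div_rpow_sub_one (a β : ℝ) :
    Tendsto (fun x : ℝ => x * ((1 + a / x) ^ β - 1)) atTop (𝓝 (a * β)) := by
  have hderiv : HasDerivAt (fun t : ℝ => (1 + a * t) ^ β) (a * β) 0 := by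
    have := (((hasDerivAt_id (0 : ℝ)).const_mul a).const_add 1).rpow_const (p := β)
      (Or.inl (by simp))
    simpa using this
  have hslope := (hasDerivAt_iff_tendsto_slope_zero.1 hderiv).comp
    (tendsto_inv_atTop_nhdsGT_zero.mono_right
      (nhdsWithin_mono _ fun _ hx => (Set.mem_Ioi.1 hx).ne'))
  refine hslope.congr' ?_
  filter_upwards [eventually_gt_atTop 0] with x hx
  simp [div_eq_mul_inv]

theorem tendsto_rpow_add_sub_rpow_div_rpow_sub_one (a β : ℝ) :
    Tendsto (fun x : ℝ => ((x + a) ^ β - x ^ β) / x ^ (β - 1)) atTop (𝓝 (a * β)) := by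
  refine (tendsto_mul_one_add_div_rpow_sub_one a β).congr' ?_
  filter_upwards [eventually_gt_atTop 0, eventually_ge_atTop (-a)] with x hx hxa
  rw [show 1 + a / x = (x + a) / x by field_simp, Real.div_rpow (by linarith) hx.le,
    Real.rpow_sub_one hx.ne']
  field_simp

theorem tendsto_increment_ratio {α : ℝ} (hα : α ≠ 2) (c : ℝ) :
    Tendsto (fun x : ℝ => 8 * (x + 1) * (x + 1 + c) ^ (-α) / ((x + 2) ^ (2 - α) - x ^ (2 - α)))
      atTop (𝓝 (4 / (2 - α))) := by
  have hnum := ((tendsto_add_div_rpow_atTop 1 1).mul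
    (tendsto_add_div_rpow_atTop (1 + c) (-α))).const_mul 8
  have hden := tendsto_rpow_add_sub_rpow_div_rpow_sub_one 2 (2 - α)
  have hlim := hnum.div hden (mul_ne_zero two_ne_zero (sub_ne_zero.2 hα.symm))
  rw [show 8 * (1 * 1) / (2 * (2 - α)) = 4 / (2 - α) by field_simp; norm_num] at hlim
  refine hlim.congr' ?_
  filter_upwards [eventually_gt_atTop 0, eventually_ge_atTop (-(1 + c))] with x hx hxc
  rw [Pi.div_apply, Real.rpow_one, Real.div_rpow (by linarith) hx.le,
    show (2 : ℝ) - α - 1 = 1 + -α by ring, Real.rpow_add hx, Real.rpow_one, add_assoc x 1 c]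
  field_simp

theorem tendsto_msd_div_rpow_two_mul_add {α : ℝ} (hα : α < 2) (p : ℕ) :
    Tendsto (fun m : ℕ => msd α (2 * m + p) / ((2 * m + p : ℕ) : ℝ) ^ (2 - α)) atTop
      (𝓝 (4 / (2 - α))) := by
  have hβ : 0 < 2 - α := by linarith
  have hn : Tendsto (fun m : ℕ => ((2 * m + p : ℕ) : ℝ)) atTop atTop :=
    tendsto_natCast_atTop_atTop.comp
      (tendsto_atTop_mono (fun m => show m ≤ 2 * m + p by omega) tendsto_id)
  refine tendsto_div_of_tendsto_sub_div_sub (fun m m' hm => ?_)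
    ((tendsto_rpow_atTop hβ).comp hn) ?_
  · exact Real.rpow_lt_rpow (by positivity)
      (by exact_mod_cast (by omega : 2 * m + p < 2 * m' + p)) hβ
  · refine ((tendsto_increment_ratio hα.ne (2 ^ (1 / α))).comp hn).congr fun m => ?_
    rw [show 2 * (m + 1) + p = 2 * m + p + 2 by ring, msd_add_two]
    simp only [Function.comp_apply, ell]
    push_cast
    ring_nf

theorem tendsto_atTop_of_tendsto_even_odd {β : Type*} {u : ℕ → β} {l : Filter β}
    (h_even : Tendsto (fun m => u (2 * m)) atTop l)
    (h_odd : Tendsto (fun m => u (2 * m + 1)) atTop l) : Tendsto u atTop l := by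
  intro s hs
  obtain ⟨N₁, h₁⟩ := eventually_atTop.1 (h_even hs)
  obtain ⟨N₂, h₂⟩ := eventually_atTop.1 (h_odd hs)
  refine eventually_atTop.2 ⟨2 * (N₁ + N₂) + 1, fun n hn => ?_⟩
  obtain ⟨m, rfl | rfl⟩ := Nat.even_or_odd' n
  · exact h₁ m (by omega)
  · exact h₂ m (by omega)

theorem slicer_msd_scaling_general (α : ℝ) (hα2 : α < 2) :
    Filter.Tendsto (fun n : ℕ => msd α n / (n:ℝ) ^ (2 - α))
      Filter.atTop (nhds (4 / (2 - α))) :=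
  tendsto_atTop_of_tendsto_even_odd (by simpa using tendsto_msd_div_rpow_two_mul_add hα2 0)
    (tendsto_msd_div_rpow_two_mul_add hα2 1)

theorem slicer_msd_scaling (α : ℝ) (hα : 0 < α) (hα2 : α < 2) :
    Filter.Tendsto (fun n : ℕ => msd α n / (n:ℝ) ^ (2 - α))
      Filter.atTop (nhds (4 / (2 - α))) :=
  slicer_msd_scaling_general α hα2
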